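/- For n i.i.d. samples each correct with fixed probability, the estimator 1 - C(n-c, k)/C(n, k), where c is the number of correct samples, is an unbiased estimator of pass@k = 1 - (1-p)^k; equivalently, E[C(n-c,k)]/C(n,k) = (1-p)^k when c ~ Binomial(n, p) and k ≤ n. -/

import Mathlib

/-! Choosing first the `c` correct samples and then `k` of the remaining ones is the same as
choosing first the `k` samples and then the `c` correct ones among the other `n - k`, so
`C(n,c) C(n-c,k) = C(n,k) C(n-k,c)`. After this swap the factor `C(n,k) (1-p)^k` comes out of
the expectation, and what remains is the binomial expansion of `(p + (1-p))^(n-k) = 1`. -/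

open Finset

theorem Nat.choose_mul_choose_sub_comm (n c k : ℕ) :
    n.choose c * (n - c).choose k = n.choose k * (n - k).choose c := by
  have hc := Nat.choose_mul (n := n) (Nat.le_add_right c k)
  have hk := Nat.choose_mul (n := n) (Nat.le_add_left k c)
  rw [Nat.add_sub_cancel_left] at hc
  rw [Nat.add_sub_cancel] at hk
  rw [← hc, ← hk, Nat.choose_symm_add]

theorem sum_choose_mul_pow_mul_choose_sub {R : Type*} [CommSemiring R] (x y : R) (n k : ℕ) :
    ∑ c ∈ range (n + 1), (n.choose c : R) * x ^ c * y ^ (n - c) * ((n - c).choose k : R)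
      = n.choose k * y ^ k * (x + y) ^ (n - k) := by
  rcases lt_or_ge n k with hnk | hkn
  · have hvanish : ∀ c, (n - c).choose k = 0 := fun c =>
      Nat.choose_eq_zero_of_lt ((Nat.sub_le n c).trans_lt hnk)
    simp [hvanish, Nat.choose_eq_zero_of_lt hnk]
  obtain ⟨m, rfl⟩ := Nat.exists_eq_add_of_le' hkn
  have htail : ∀ j ∈ range k,
      ((m + k).choose (m + 1 + j) : R) * x ^ (m + 1 + j) * y ^ (m + k - (m + 1 + j))
        * ((m + k - (m + 1 + j)).choose k : R) = 0 := by
    intro j hj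
    rw [Nat.choose_eq_zero_of_lt (n := m + k - (m + 1 + j)) (by grind), Nat.cast_zero, mul_zero]
  have hhead : ∀ c ∈ range (m + 1),
      ((m + k).choose c : R) * x ^ c * y ^ (m + k - c) * ((m + k - c).choose k : R)
        = (m + k).choose k * y ^ k * (x ^ c * y ^ (m - c) * m.choose c) := by
    intro c hc
    have hcm : m + k - c = k + (m - c) := by grind
    calc _ = ((m + k).choose c * (m + k - c).choose k : ℕ) * (x ^ c * y ^ k * y ^ (m - c)) := by
          rw [hcm, pow_add]; push_cast; ring
      _ = _ := by
          rw [Nat.choose_mul_choose_sub_comm, Nat.add_sub_cancel]; push_cast; ring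
  rw [show m + k + 1 = m + 1 + k by omega, sum_range_add, sum_eq_zero htail, add_zero,
    sum_congr rfl hhead, ← mul_sum, ← add_pow, Nat.add_sub_cancel]

theorem passk_estimator_unbiased_general (n k : ℕ)
    (p : ℝ) :
    ∑ c ∈ Finset.range (n + 1),
        (n.choose c : ℝ) * p ^ c * (1 - p) ^ (n - c) * ((n - c).choose k : ℝ)
      = (1 - p) ^ k * (n.choose k : ℝ) := by
  rw [sum_choose_mul_pow_mul_choose_sub, add_sub_cancel, one_pow, mul_one, mul_comm]

/-- Unbiasedness of the pass@k estimator: if `c ~ Binomial(n,p)` then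
`E[C(n-c,k)]/C(n,k) = (1-p)^k`, equivalently the expectation of
`C(n-c,k)` over the binomial distribution equals `(1-p)^k · C(n,k)`. -/
theorem passk_estimator_unbiased (n k : ℕ) (hk : 1 ≤ k) (hkn : k ≤ n)
    (p : ℝ) (hp : 0 ≤ p) (hp1 : p ≤ 1) :
    ∑ c ∈ Finset.range (n + 1),
        (n.choose c : ℝ) * p ^ c * (1 - p) ^ (n - c) * ((n - c).choose k : ℝ)
      = (1 - p) ^ k * (n.choose k : ℝ) :=
  passk_estimator_unbiased_general n k p
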